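/- arXiv:2310.09900 — 4 statements merged into one kernel-verified Lean document; each statement's English description precedes it below -/
import Mathlib

section
/- The n-th Catalan number is odd if and only if n = 2^k - 1 for some natural number k. -/
/-!
Reduce the recursion `C (n + 1) = ∑_{i + j = n} C i * C j` modulo 2: the terms `(i, j)` and
`(j, i)` cancel, so only the diagonal term survives. Hence `C (2m + 2)` is even and
`C (2m + 1) ≡ C m ^ 2 ≡ C m`, and by induction `C n` is odd exactly when `n + 1` is a power of two.
-/

open Finset.HasAntidiagonal

section CharTwo

variable {R : Type*} [CommSemiring R] [CharP R 2]

theorem CharTwo.sum_mul_eq_zero_of_swap_mem {s : Finset (ℕ × ℕ)}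
    (hswap : ∀ x ∈ s, x.swap ∈ s) (hdiag : ∀ x ∈ s, x.1 ≠ x.2) (f : ℕ → R) :
    ∑ x ∈ s, f x.1 * f x.2 = 0 :=
  Finset.sum_involution (fun x _ => x.swap)
    (fun x _ => by rw [Prod.fst_swap, Prod.snd_swap, mul_comm, CharTwo.add_self_eq_zero])
    (fun x hx _ h => hdiag x hx (congrArg Prod.snd h))
    hswap (fun _ _ => Prod.swap_swap _)

theorem CharTwo.sum_antidiagonal_two_mul_add_one (f : ℕ → R) (m : ℕ) :
    ∑ x ∈ antidiagonal (2 * m + 1), f x.1 * f x.2 = 0 :=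
  CharTwo.sum_mul_eq_zero_of_swap_mem (fun _ => swap_mem_antidiagonal.2)
    (fun x hx => by rw [mem_antidiagonal] at hx; omega) f

theorem CharTwo.sum_antidiagonal_two_mul (f : ℕ → R) (m : ℕ) :
    ∑ x ∈ antidiagonal (2 * m), f x.1 * f x.2 = f m ^ 2 := by
  have hmem : (m, m) ∈ antidiagonal (2 * m) := mem_antidiagonal.2 (two_mul m).symm
  have hoff : ∑ x ∈ (antidiagonal (2 * m)).erase (m, m), f x.1 * f x.2 = 0 := by
    refine CharTwo.sum_mul_eq_zero_of_swap_mem (fun x hx => ?_) (fun x hx => ?_) f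
    · obtain ⟨hne, hx⟩ := Finset.mem_erase.1 hx
      exact Finset.mem_erase.2 ⟨fun h => hne (by rw [← Prod.swap_swap x, h]; rfl),
        swap_mem_antidiagonal.2 hx⟩
    · obtain ⟨hne, hx⟩ := Finset.mem_erase.1 hx
      rw [mem_antidiagonal] at hx
      exact fun h => hne (Prod.ext (by omega) (by omega))
  rw [← Finset.add_sum_erase _ _ hmem, hoff, add_zero, sq]

end CharTwo

theorem catalan_two_mul_add_one_cast_zmod_two (m : ℕ) :
    (catalan (2 * m + 1) : ZMod 2) = (catalan m : ZMod 2) ^ 2 := by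
  rw [catalan_succ', Nat.cast_sum]
  simp only [Nat.cast_mul]
  exact CharTwo.sum_antidiagonal_two_mul (fun i => (catalan i : ZMod 2)) m

theorem even_catalan_two_mul_add_two (m : ℕ) : Even (catalan (2 * m + 2)) := by
  rw [← ZMod.natCast_eq_zero_iff_even, catalan_succ', Nat.cast_sum]
  simp only [Nat.cast_mul]
  exact CharTwo.sum_antidiagonal_two_mul_add_one (fun i => (catalan i : ZMod 2)) m

theorem odd_catalan_two_mul_add_one_iff (m : ℕ) :
    Odd (catalan (2 * m + 1)) ↔ Odd (catalan m) := by
  rw [← ZMod.natCast_ne_zero_iff_odd, ← ZMod.natCast_ne_zero_iff_odd,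
    catalan_two_mul_add_one_cast_zmod_two, ne_eq, pow_eq_zero_iff two_ne_zero]

theorem exists_eq_two_pow_sub_one_iff (n : ℕ) :
    (∃ k, n = 2 ^ k - 1) ↔ ∃ k, n + 1 = 2 ^ k :=
  exists_congr fun k => by have := Nat.one_le_two_pow (n := k); omega

theorem exists_two_mul_add_two_eq_two_pow_iff (m : ℕ) :
    (∃ k, 2 * m + 2 = 2 ^ k) ↔ ∃ k, m + 1 = 2 ^ k := by
  constructor
  · rintro ⟨_ | k, hk⟩
    · omega
    · exact ⟨k, by rw [pow_succ] at hk; omega⟩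
  · rintro ⟨k, hk⟩
    exact ⟨k + 1, by rw [pow_succ]; omega⟩

theorem two_mul_add_three_ne_two_pow (m k : ℕ) : 2 * m + 3 ≠ 2 ^ k := by
  rcases k with _ | k
  · omega
  · rw [pow_succ]; omega

/-- The n-th Catalan number is odd if and only if `n = 2^k - 1` for some natural number `k`. -/
theorem catalan_odd_iff (n : ℕ) : Odd (catalan n) ↔ ∃ k : ℕ, n = 2 ^ k - 1 := by
  rw [exists_eq_two_pow_sub_one_iff]
  induction n using Nat.strong_induction_on with
  | _ n ih =>
    rcases n with _ | n
    · exact iff_of_true (by simp) ⟨0, rfl⟩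
    obtain ⟨m, rfl | rfl⟩ := Nat.even_or_odd' n
    · rw [odd_catalan_two_mul_add_one_iff, ih m (by omega), exists_two_mul_add_two_eq_two_pow_iff]
    · simp only [Nat.not_odd_iff_even.2 (even_catalan_two_mul_add_two m), false_iff, not_exists]
      exact two_mul_add_three_ne_two_pow m
end

section
/- The n-th Catalan number equals the sum over all unlabeled rooted binary tree shapes T with n internal nodes of 2^(n - m(T) - s(T)), where m(T) is the number of internal nodes both of whose children are leaves (maximal nodes) and s(T) is the number of internal nodes whose two children subtrees (as unordered trees) are isomorphic (symmetric nodes). -/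
open BinaryTree

/-- Unordered isomorphism of rooted binary trees (forgetting the left/right order). -/
def uisoB : BinaryTree Unit → BinaryTree Unit → Bool
  | BinaryTree.nil, BinaryTree.nil => true
  | BinaryTree.node _ a b, BinaryTree.node _ c d =>
      (uisoB a c && uisoB b d) || (uisoB a d && uisoB b c)
  | _, _ => false

/-- Number of "maximal" internal nodes: internal nodes both of whose children are leaves. -/
def maxCount : BinaryTree Unit → ℕ
  | BinaryTree.nil => 0
  | BinaryTree.node _ l r =>
      (if l = BinaryTree.nil ∧ r = BinaryTree.nil then 1 else 0) + maxCount l + maxCount r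

/-- Number of "symmetric" internal nodes: internal nodes whose two children subtrees are
isomorphic as unordered trees but are not both leaves. -/
def symCount : BinaryTree Unit → ℕ
  | BinaryTree.nil => 0
  | BinaryTree.node _ l r =>
      (if uisoB l r = true ∧ ¬(l = BinaryTree.nil ∧ r = BinaryTree.nil) then 1 else 0)
        + symCount l + symCount r

/-!
A plane tree `U` has exactly `2 ^ (n - m(U) - s(U))` plane trees in its unordered-isomorphism
class: the class of `node l r` is built from the classes of `l` and `r`, once if `l ≅ r` and
twice (with the children swapped, giving disjoint sets) otherwise. So exactly the internal
nodes with non-isomorphic children double the class; these are the nodes that are neither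
maximal (`nil ≅ nil`) nor symmetric. Summing the class sizes over a transversal counts all
plane trees with `n` internal nodes, i.e. gives `catalan n`.
-/

open Finset

theorem Finset.card_eq_sum_card_of_transversal {α : Type*} [DecidableEq α]
    {S R : Finset α} {cls : α → Finset α} (hsub : ∀ U ∈ R, cls U ⊆ S)
    (huniq : ∀ T ∈ S, ∃! U, U ∈ R ∧ T ∈ cls U) :
    #S = ∑ U ∈ R, #(cls U) := by
  have hcover : S = R.biUnion cls := by
    ext T
    refine ⟨fun hT => ?_, fun hT => ?_⟩
    · obtain ⟨U, ⟨hU, hTU⟩, -⟩ := huniq T hT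
      exact mem_biUnion.2 ⟨U, hU, hTU⟩
    · obtain ⟨U, hU, hTU⟩ := mem_biUnion.1 hT
      exact hsub U hU hTU
  have hdisj : (R : Set α).PairwiseDisjoint cls := by
    intro U hU V hV hne
    refine disjoint_left.2 fun T hTU hTV => hne ?_
    obtain ⟨W, -, hW⟩ := huniq T (hsub U hU hTU)
    exact (hW U ⟨hU, hTU⟩).trans (hW V ⟨hV, hTV⟩).symm
  rw [hcover, card_biUnion hdisj]

theorem uisoB_symm : ∀ {a b : BinaryTree Unit}, uisoB a b = true → uisoB b a = true
  | nil, nil, _ => rfl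
  | node _ a b, node _ c d, h => by
      simp only [uisoB, Bool.or_eq_true, Bool.and_eq_true] at h ⊢
      rcases h with ⟨hac, hbd⟩ | ⟨had, hbc⟩
      · exact Or.inl ⟨uisoB_symm hac, uisoB_symm hbd⟩
      · exact Or.inr ⟨uisoB_symm hbc, uisoB_symm had⟩
  | nil, node _ _ _, h | node _ _ _, nil, h => by simp [uisoB] at h

theorem uisoB_trans : ∀ {a b c : BinaryTree Unit},
    uisoB a b = true → uisoB b c = true → uisoB a c = true
  | nil, nil, nil, _, _ => rfl
  | node _ a₁ a₂, node _ b₁ b₂, node _ c₁ c₂, hab, hbc => by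
      simp only [uisoB, Bool.or_eq_true, Bool.and_eq_true] at hab hbc ⊢
      rcases hab with ⟨p, q⟩ | ⟨p, q⟩ <;> rcases hbc with ⟨u, v⟩ | ⟨u, v⟩
      · exact Or.inl ⟨uisoB_trans p u, uisoB_trans q v⟩
      · exact Or.inr ⟨uisoB_trans p u, uisoB_trans q v⟩
      · exact Or.inr ⟨uisoB_trans p v, uisoB_trans q u⟩
      · exact Or.inl ⟨uisoB_trans p v, uisoB_trans q u⟩
  | nil, nil, node _ _ _, _, h | nil, node _ _ _, _, h, _ | node _ _ _, nil, _, h, _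
  | node _ _ _, node _ _ _, nil, _, h => by simp [uisoB] at h

theorem numNodes_eq_of_uisoB : ∀ {a b : BinaryTree Unit}, uisoB a b = true →
    a.numNodes = b.numNodes
  | nil, nil, _ => rfl
  | node _ a₁ a₂, node _ b₁ b₂, h => by
      simp only [uisoB, Bool.or_eq_true, Bool.and_eq_true] at h
      rcases h with ⟨p, q⟩ | ⟨p, q⟩ <;>
        simp only [numNodes, numNodes_eq_of_uisoB p, numNodes_eq_of_uisoB q, add_comm]
  | nil, node _ _ _, h | node _ _ _, nil, h => by simp [uisoB] at h

def isoClass : BinaryTree Unit → Finset (BinaryTree Unit)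
  | nil => {nil}
  | node _ l r =>
      ((isoClass l ×ˢ isoClass r).image fun p => node () p.1 p.2) ∪
      ((isoClass r ×ˢ isoClass l).image fun p => node () p.1 p.2)

theorem mem_isoClass : ∀ {U T : BinaryTree Unit}, T ∈ isoClass U ↔ uisoB T U = true
  | nil, T => by cases T <;> simp [isoClass, uisoB]
  | node _ l r, nil => by simp [isoClass, uisoB]
  | node _ l r, node () a b => by
      simp only [isoClass, mem_union, mem_image, mem_product, Prod.exists,
        node.injEq, true_and, exists_eq_right_right, uisoB, Bool.or_eq_true, Bool.and_eq_true,
        mem_isoClass, exists_eq_right]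

theorem isoClass_eq_of_uisoB {a b : BinaryTree Unit} (h : uisoB a b = true) :
    isoClass a = isoClass b := by
  ext T
  simp only [mem_isoClass]
  exact ⟨fun hT => uisoB_trans hT h, fun hT => uisoB_trans hT (uisoB_symm h)⟩

theorem node_injective :
    Function.Injective fun p : BinaryTree Unit × BinaryTree Unit => node () p.1 p.2 := by
  rintro ⟨a, b⟩ ⟨c, d⟩ h
  simp_all

theorem card_isoClass_node (l r : BinaryTree Unit) :
    #(isoClass (node () l r)) =
      (if uisoB l r then 1 else 2) * (#(isoClass l) * #(isoClass r)) := by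
  have hcard : ∀ a b : BinaryTree Unit,
      #((isoClass a ×ˢ isoClass b).image fun p => node () p.1 p.2) =
        #(isoClass a) * #(isoClass b) := fun a b => by
    rw [card_image_of_injective _ node_injective, card_product]
  by_cases h : uisoB l r = true
  · rw [isoClass, isoClass_eq_of_uisoB h, union_self, hcard, if_pos h, one_mul]
  · -- a tree in both halves would have left subtree isomorphic to both `l` and `r`
    have hdisj : Disjoint ((isoClass l ×ˢ isoClass r).image fun p => node () p.1 p.2)
        ((isoClass r ×ˢ isoClass l).image fun p => node () p.1 p.2) := by
      simp only [disjoint_left, mem_image, mem_product, Prod.exists]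
      rintro _ ⟨a, b, ⟨hal, -⟩, rfl⟩ ⟨a', b', ⟨har, -⟩, hab⟩
      obtain ⟨-, rfl, -⟩ := node.inj hab
      exact h (uisoB_trans (uisoB_symm (mem_isoClass.1 hal)) (mem_isoClass.1 har))
    rw [isoClass, card_union_of_disjoint hdisj, hcard, hcard, if_neg h]
    ring

theorem maxCount_add_symCount_le_numNodes :
    ∀ t : BinaryTree Unit, maxCount t + symCount t ≤ t.numNodes
  | nil => le_rfl
  | node _ l r => by
      have hl := maxCount_add_symCount_le_numNodes l
      have hr := maxCount_add_symCount_le_numNodes r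
      simp only [maxCount, symCount, numNodes]
      split_ifs with hmax hsym
      · exact absurd hmax hsym.2
      all_goals omega

theorem numNodes_sub_maxCount_sub_symCount_node (l r : BinaryTree Unit) :
    (node () l r).numNodes - maxCount (node () l r) - symCount (node () l r) =
      (if uisoB l r then 0 else 1) + (l.numNodes - maxCount l - symCount l) +
        (r.numNodes - maxCount r - symCount r) := by
  have hl := maxCount_add_symCount_le_numNodes l
  have hr := maxCount_add_symCount_le_numNodes r
  simp only [maxCount, symCount, numNodes]
  by_cases hnil : l = nil ∧ r = nil
  · obtain ⟨rfl, rfl⟩ := hnil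
    simp [uisoB, maxCount, symCount]
  · split_ifs <;> simp_all <;> omega

theorem card_isoClass (U : BinaryTree Unit) :
    #(isoClass U) = 2 ^ (U.numNodes - maxCount U - symCount U) := by
  induction U with
  | nil => rfl
  | node _ l r ihl ihr =>
    rw [card_isoClass_node, numNodes_sub_maxCount_sub_symCount_node, ihl, ihr, pow_add, pow_add]
    split_ifs <;> ring

/-- The n-th Catalan number equals the sum, over a transversal `R` of the unordered-isomorphism
classes of rooted binary trees with `n` internal nodes, of `2 ^ (n - m(T) - s(T))`. -/
theorem catalan_eq_sum_over_shapes (n : ℕ) (R : Finset (BinaryTree Unit))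
    (hR : R ⊆ treesOfNumNodesEq n)
    (htrans : ∀ T ∈ treesOfNumNodesEq n, ∃! U, U ∈ R ∧ uisoB T U = true) :
    catalan n = ∑ T ∈ R, 2 ^ (n - maxCount T - symCount T) := by
  have hnum : ∀ U ∈ R, U.numNodes = n := fun U hU => mem_treesOfNumNodesEq.1 (hR hU)
  have hsub : ∀ U ∈ R, isoClass U ⊆ treesOfNumNodesEq n := fun U hU T hT => by
    rw [mem_treesOfNumNodesEq, numNodes_eq_of_uisoB (mem_isoClass.1 hT), hnum U hU]
  rw [← treesOfNumNodesEq_card_eq_catalan,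
    card_eq_sum_card_of_transversal hsub (by simpa only [mem_isoClass] using htrans)]
  exact sum_congr rfl fun U hU => by rw [card_isoClass, hnum U hU]
end

section
/- Define a bracket on the free vector space over compositions by γ(O_α ⊗ O_β) = O_{α·β} − O_{β·α} + O_{α⊙β} − O_{β⊙α}, where · is concatenation and ⊙ is near-concatenation of compositions. This bracket is antisymmetric and satisfies the Jacobi identity, hence defines a Lie algebra structure. -/
/-- A composition: a nonempty finite sequence of positive integers. -/
def Comp : Type := {l : List ℕ // l ≠ [] ∧ ∀ x ∈ l, 0 < x}

/-- Concatenation of compositions. -/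
def compConcat (a b : Comp) : Comp :=
  ⟨a.1 ++ b.1, fun h => a.2.1 (List.append_eq_nil_iff.mp h).1, by
    intro x hx
    rcases List.mem_append.mp hx with h | h
    · exact a.2.2 x h
    · exact b.2.2 x h⟩

/-- Near-concatenation of compositions:
`(α_1,…,α_k) ⊙ (β_1,…,β_ℓ) = (α_1,…,α_{k-1}, α_k + β_1, β_2,…,β_ℓ)`. -/
def compNearConcat (a b : Comp) : Comp :=
  ⟨a.1.dropLast ++ (a.1.getLast a.2.1 + b.1.head b.2.1) :: b.1.tail, by simp, by
    intro x hx
    rcases List.mem_append.mp hx with h | h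
    · exact a.2.2 x (List.dropLast_subset _ h)
    · rcases List.mem_cons.mp h with h | h
      · subst h
        exact add_pos (a.2.2 _ (List.getLast_mem a.2.1)) (b.2.2 _ (List.head_mem b.2.1))
      · exact b.2.2 x (List.tail_subset _ h)⟩

/-- The bilinear bracket on the free vector space with basis the compositions, determined on
basis elements by `[O_α, O_β] = O_{α·β} − O_{β·α} + O_{α⊙β} − O_{β⊙α}`. -/
noncomputable def opBr (K : Type*) [Field K] (x y : Comp →₀ K) : Comp →₀ K :=
  x.sum fun a ca => y.sum fun b cb =>
    (ca * cb) • (Finsupp.single (compConcat a b) (1 : K) - Finsupp.single (compConcat b a) 1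
      + Finsupp.single (compNearConcat a b) 1 - Finsupp.single (compNearConcat b a) 1)

/-! The bracket is the commutator `xy - yx` of the bilinear product
`O_α O_β = O_{α·β} + O_{α⊙β}`. This product is associative because concatenation and
near-concatenation satisfy the four associativity laws `(a∘b)∘'c = a∘(b∘'c)` for `∘, ∘' ∈ {·, ⊙}`,
and the commutator of an associative product is antisymmetric and satisfies Jacobi. -/

namespace Finsupp

variable {R σ : Type*} [CommSemiring R]

noncomputable def linearCombination₂ (μ : σ → σ → σ →₀ R) :
    (σ →₀ R) →ₗ[R] (σ →₀ R) →ₗ[R] σ →₀ R :=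
  linearCombination R fun a => linearCombination R (μ a)

variable (μ : σ → σ → σ →₀ R)

theorem linearCombination₂_single (a b : σ) (r s : R) :
    linearCombination₂ μ (single a r) (single b s) = (r * s) • μ a b := by
  simp only [linearCombination₂, linearCombination_single, LinearMap.smul_apply, smul_smul]

theorem linearCombination₂_apply (x y : σ →₀ R) :
    linearCombination₂ μ x y = x.sum fun a r => y.sum fun b s => (r * s) • μ a b := by
  simp only [linearCombination₂, linearCombination_apply, LinearMap.finsupp_sum_apply,
    LinearMap.smul_apply, smul_sum, smul_smul]

theorem linearCombination₂_assoc
    (h : ∀ a b c, linearCombination₂ μ (μ a b) (single c 1) =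
      linearCombination₂ μ (single a 1) (μ b c))
    (x y z : σ →₀ R) :
    linearCombination₂ μ (linearCombination₂ μ x y) z =
      linearCombination₂ μ x (linearCombination₂ μ y z) := by
  induction x using induction_linear with
  | zero => simp
  | add x x' hx hx' => simp only [map_add, LinearMap.add_apply, hx, hx']
  | single a r =>
    induction y using induction_linear with
    | zero => simp
    | add y y' hy hy' => simp only [map_add, LinearMap.add_apply, hy, hy']
    | single b s =>
      induction z using induction_linear with
      | zero => simp
      | add z z' hz hz' => simp only [map_add, hz, hz']
      | single c t =>
        rw [← smul_single_one a r, ← smul_single_one b s, ← smul_single_one c t]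
        simp only [map_smul, LinearMap.smul_apply, linearCombination₂_single, one_mul, one_smul,
          h]

end Finsupp

theorem compConcat_assoc (a b c : Comp) :
    compConcat (compConcat a b) c = compConcat a (compConcat b c) :=
  Subtype.ext (List.append_assoc _ _ _)

theorem compNearConcat_compConcat (a b c : Comp) :
    compNearConcat (compConcat a b) c = compConcat a (compNearConcat b c) := by
  have hb : b.1 ≠ [] := b.2.1
  apply Subtype.ext
  simp [compConcat, compNearConcat, List.dropLast_append_of_ne_nil hb,
    List.getLast_append_right hb]

theorem compConcat_compNearConcat (a b c : Comp) :
    compConcat (compNearConcat a b) c = compNearConcat a (compConcat b c) := by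
  have hb : b.1 ≠ [] := b.2.1
  apply Subtype.ext
  simp [compConcat, compNearConcat, List.tail_append_of_ne_nil hb, List.head_append_left hb]

theorem compNearConcat_assoc (a b c : Comp) :
    compNearConcat (compNearConcat a b) c = compNearConcat a (compNearConcat b c) := by
  apply Subtype.ext
  obtain ⟨_ | ⟨y, _ | ⟨y', b'⟩⟩, hb, -⟩ := b
  · exact absurd rfl hb
  · simp [compNearConcat, add_assoc]
  · simp [compNearConcat, List.dropLast_append_of_ne_nil]

section CompositionAlgebra

open Finsupp

variable (R : Type*) [CommSemiring R]

noncomputable def compMul (a b : Comp) : Comp →₀ R :=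
  single (compConcat a b) 1 + single (compNearConcat a b) 1

theorem compMul_assoc (a b c : Comp) :
    linearCombination₂ (compMul R) (compMul R a b) (single c 1) =
      linearCombination₂ (compMul R) (single a 1) (compMul R b c) := by
  simp only [compMul, map_add, LinearMap.add_apply, linearCombination₂_single, one_mul, one_smul,
    compConcat_assoc, compNearConcat_compConcat, compConcat_compNearConcat,
    compNearConcat_assoc]
  abel

theorem opBr_eq_commutator (K : Type*) [Field K] (x y : Comp →₀ K) :
    opBr K x y = linearCombination₂ (compMul K) x y - linearCombination₂ (compMul K) y x := by
  rw [linearCombination₂_apply, linearCombination₂_apply,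
    sum_comm y x fun b s a r => (s * r) • compMul K b a, opBr, ← sum_sub]
  refine sum_congr fun a _ => ?_
  rw [← sum_sub]
  refine sum_congr fun b _ => ?_
  rw [mul_comm _ (x a), ← smul_sub, compMul, compMul]
  abel_nf

end CompositionAlgebra

theorem opBr_lie_general (K : Type*) [Field K] :
    (∀ x y : Comp →₀ K, opBr K x y = - opBr K y x) ∧
    (∀ x y z : Comp →₀ K,
      opBr K x (opBr K y z) + opBr K y (opBr K z x) + opBr K z (opBr K x y) = 0) := by
  have assoc := Finsupp.linearCombination₂_assoc (compMul K) (compMul_assoc K)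
  refine ⟨fun x y => ?_, fun x y z => ?_⟩
  · rw [opBr_eq_commutator, opBr_eq_commutator]
    abel
  · simp only [opBr_eq_commutator, map_sub, LinearMap.sub_apply, assoc]
    abel

/-- Over a field of characteristic zero, the bracket
`[O_α, O_β] = O_{α·β} − O_{β·α} + O_{α⊙β} − O_{β⊙α}` on the free vector space over
compositions is antisymmetric and satisfies the Jacobi identity, hence defines a Lie
algebra. -/
theorem opBr_lie (K : Type*) [Field K] [CharZero K] :
    (∀ x y : Comp →₀ K, opBr K x y = - opBr K y x) ∧
    (∀ x y z : Comp →₀ K,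
      opBr K x (opBr K y z) + opBr K y (opBr K z x) + opBr K z (opBr K x y) = 0) :=
  opBr_lie_general K
end

section
/- For a rooted binary tree T with n internal nodes, labeled by the binary search labeling, performing a tree rotation at an internal edge between nodes i (child) and j (parent) changes Loday's vertex v(T) = (l_1 r_1, ..., l_n r_n) by a vector of the form c(e_i − e_j) or c(e_j − e_i) for a positive integer c; in the case i is a left child of j, v(T') − v(T) = l_i r_j (e_i − e_j), where l_k and r_k are the numbers of leaves in the left and right subtrees of node k. -/
open Tree

/-- Loday's vertex of a rooted binary tree, as the list of coordinates `l_k * r_k` of the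
internal nodes `k`, listed in in-order (binary search) order: the `k`-th entry is the product
of the numbers of leaves in the left and right subtrees of the `k`-th internal node. -/
def lodayList : Tree Unit → List ℕ
  | BinaryTree.nil => []
  | BinaryTree.node _ l r => lodayList l ++ (l.numLeaves * r.numLeaves) :: lodayList r

/-- One tree rotation at some internal edge: replace a local subtree `(x∧y)∧z` by
`x∧(y∧z)`. -/
inductive Rot : Tree Unit → Tree Unit → Prop
  | here (x y z : Tree Unit) :
      Rot (Tree.node () (Tree.node () x y) z) (Tree.node () x (Tree.node () y z))
  | left {l l' : Tree Unit} (r : Tree Unit) : Rot l l' → Rot (Tree.node () l r) (Tree.node () l' r)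
  | right (l : Tree Unit) {r r' : Tree Unit} : Rot r r' → Rot (Tree.node () l r) (Tree.node () l r')

/-! With in-order labels, the rotation `(x∧y)∧z ↦ x∧(y∧z)` keeps every label in place and
changes only two products: at the node between `x` and `y`, `l_x l_y` becomes `l_x (l_y + l_z)`,
and at the node between `y` and `z`, `(l_x + l_y) l_z` becomes `l_y l_z`; the weight `l_x l_z`
moves from the second to the first. A rotation inside a subtree preserves its number of leaves,
so it changes no coordinate outside that subtree and only shifts the two labels by the subtree's
in-order offset. -/

lemma List.getD_append_cons {α : Type*} (A : List α) (b : α) (B : List α) (d : α) (k : ℕ) :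
    (A ++ b :: B).getD k d =
      if k < A.length then A.getD k d
      else if k = A.length then b
      else B.getD (k - A.length - 1) d := by
  split_ifs with hlt heq
  · exact List.getD_append _ _ _ _ hlt
  · subst heq
    simp
  · rw [List.getD_append_right _ _ _ _ (by omega), show k - A.length = k - A.length - 1 + 1 by omega,
      List.getD_cons_succ, Nat.add_sub_cancel]

/-- `v - u = c (e_i - e_j)`, reading lists of naturals as integer vectors padded by zeros. -/
def IsTransfer (u v : List ℕ) (c i j : ℕ) : Prop :=
  ∀ k : ℕ, (v.getD k 0 : ℤ) - (u.getD k 0 : ℤ) =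
    (c : ℤ) * ((if k = i then 1 else 0) - (if k = j then 1 else 0))

namespace IsTransfer

variable {u v : List ℕ} {c i j : ℕ}

lemma append_left (h : IsTransfer u v c i j) (p : List ℕ) :
    IsTransfer (p ++ u) (p ++ v) c (p.length + i) (p.length + j) := by
  intro k
  by_cases hk : k < p.length
  · rw [List.getD_append _ _ _ _ hk, List.getD_append _ _ _ _ hk,
      if_neg (by omega), if_neg (by omega)]
    ring
  · rw [List.getD_append_right _ _ _ _ (by omega), List.getD_append_right _ _ _ _ (by omega), h]
    congr 2 <;> apply if_congr <;> omega

lemma append_right (h : IsTransfer u v c i j) (hlen : v.length = u.length)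
    (hi : i < u.length) (hj : j < u.length) (s : List ℕ) :
    IsTransfer (u ++ s) (v ++ s) c i j := by
  intro k
  by_cases hk : k < u.length
  · rw [List.getD_append _ _ _ _ hk, List.getD_append _ _ _ _ (hlen ▸ hk), h]
  · rw [List.getD_append_right _ _ _ _ (by omega), List.getD_append_right _ _ _ _ (by omega),
      hlen, if_neg (by omega), if_neg (by omega)]
    ring

lemma of_append_cons_append_cons (X Y Z : List ℕ) (a b c : ℕ) :
    IsTransfer (X ++ a :: (Y ++ (b + c) :: Z)) (X ++ (a + c) :: (Y ++ b :: Z)) c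
      X.length (X.length + Y.length + 1) := by
  intro k
  simp only [List.getD_append_cons]
  split_ifs <;> omega

end IsTransfer

lemma lodayList_length (t : BinaryTree Unit) : (lodayList t).length = t.numNodes := by
  induction t with
  | nil => rfl
  | node _ l r ihl ihr =>
    simp only [lodayList, List.length_append, List.length_cons, ihl, ihr, BinaryTree.numNodes]
    omega

lemma isTransfer_lodayList_rotate (x y z : BinaryTree Unit) :
    IsTransfer (lodayList (.node () (.node () x y) z)) (lodayList (.node () x (.node () y z)))
      (x.numLeaves * z.numLeaves) x.numNodes (x.numNodes + y.numNodes + 1) := by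
  have h := IsTransfer.of_append_cons_append_cons (lodayList x) (lodayList y) (lodayList z)
    (x.numLeaves * y.numLeaves) (y.numLeaves * z.numLeaves) (x.numLeaves * z.numLeaves)
  simp only [lodayList_length] at h
  convert h using 2 <;> simp only [lodayList, BinaryTree.numLeaves, List.append_assoc,
    List.cons_append] <;> ring_nf

namespace Rot

lemma numLeaves_eq {T T' : BinaryTree Unit} (h : Rot T T') : T'.numLeaves = T.numLeaves := by
  induction h with
  | here x y z => simp only [BinaryTree.numLeaves]; omega
  | left r _ ih => simp only [BinaryTree.numLeaves, ih]
  | right l _ ih => simp only [BinaryTree.numLeaves, ih]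

lemma numNodes_eq {T T' : BinaryTree Unit} (h : Rot T T') : T'.numNodes = T.numNodes := by
  have := h.numLeaves_eq
  simp only [BinaryTree.numLeaves_eq_numNodes_succ] at this
  omega

lemma exists_isTransfer {T T' : BinaryTree Unit} (h : Rot T T') :
    ∃ c i j : ℕ, i < T.numNodes ∧ j < T.numNodes ∧ i ≠ j ∧ 0 < c ∧
      IsTransfer (lodayList T) (lodayList T') c i j := by
  induction h with
  | here x y z =>
    refine ⟨_, _, _, ?_, ?_, by omega, Nat.mul_pos x.numLeaves_pos z.numLeaves_pos,
      isTransfer_lodayList_rotate x y z⟩ <;> simp only [BinaryTree.numNodes] <;> omega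
  | @left l l' r hrot ih =>
    obtain ⟨c, i, j, hi, hj, hij, hc, ht⟩ := ih
    refine ⟨c, i, j, ?_, ?_, hij, hc, ?_⟩
    · simp only [BinaryTree.numNodes]; omega
    · simp only [BinaryTree.numNodes]; omega
    · simp only [lodayList, ← hrot.numLeaves_eq]
      exact ht.append_right (by simp only [lodayList_length, hrot.numNodes_eq])
        (by rwa [lodayList_length]) (by rwa [lodayList_length]) _
  | @right l r r' hrot ih =>
    obtain ⟨c, i, j, hi, hj, hij, hc, ht⟩ := ih
    refine ⟨c, BinaryTree.numNodes l + 1 + i, BinaryTree.numNodes l + 1 + j, ?_, ?_, by omega, hc,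
      ?_⟩
    · simp only [BinaryTree.numNodes]; omega
    · simp only [BinaryTree.numNodes]; omega
    · have := ht.append_left (lodayList l ++ [l.numLeaves * r.numLeaves])
      simpa [lodayList, lodayList_length, ← hrot.numLeaves_eq] using this

end Rot

/-- A tree rotation changes Loday's vertex `v(T) = (l_1 r_1, …, l_n r_n)` (coordinates read
off via the in-order labeling) by a vector `c (e_i - e_j)` for two distinct internal node
labels `i, j` and a positive integer `c`; moreover for the rotation `(x∧y)∧z ↦ x∧(y∧z)`
(where the child node `i = x∧y` is a left child of its parent `j`), the change is exactly
`l_i r_j (e_i - e_j)`, where `l_i = numLeaves x` and `r_j = numLeaves z`. -/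
theorem loday_vertex_rotation :
    (∀ T T' : Tree Unit, Rot T T' →
      ∃ (i j : ℕ) (c : ℕ), i < T.numNodes ∧ j < T.numNodes ∧ i ≠ j ∧ 0 < c ∧
        ∀ k : ℕ, ((lodayList T').getD k 0 : ℤ) - ((lodayList T).getD k 0 : ℤ) =
          (c : ℤ) * ((if k = i then 1 else 0) - (if k = j then 1 else 0))) ∧
    (∀ x y z : Tree Unit,
      ∀ k : ℕ,
        ((lodayList (Tree.node () x (Tree.node () y z))).getD k 0 : ℤ) -
          ((lodayList (Tree.node () (Tree.node () x y) z)).getD k 0 : ℤ) =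
        (x.numLeaves * z.numLeaves : ℤ) *
          ((if k = x.numNodes then 1 else 0) -
            (if k = x.numNodes + y.numNodes + 1 then 1 else 0))) := by
  refine ⟨fun T T' h => ?_, fun x y z k => ?_⟩
  · obtain ⟨c, i, j, hi, hj, hij, hc, ht⟩ := h.exists_isTransfer
    exact ⟨i, j, c, hi, hj, hij, hc, ht⟩
  · exact_mod_cast isTransfer_lodayList_rotate x y z k
end
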